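/- arXiv:1506.03476 — 7 statements merged into one kernel-verified Lean document; each statement's English description precedes it below -/
import Mathlib

section
/- If the Ricci tensor is of Codazzi type, i.e., ∇_a R_{ce} = ∇_c R_{ae} for all indices, then the W-curvature tensor satisfies the Bianchi-like identity ∇_a W_{bcde} + ∇_b W_{cade} + ∇_c W_{abde} = 0. -/
/-- 4-dimensional pseudo-Riemannian manifold, components at a point.
`DR a b c d e` denotes `∇_a R_{bcde}` and `DRic a b c` denotes `∇_a R_{bc}`
(using metric compatibility `∇g = 0`). The Riemann tensor satisfies the second
Bianchi identity and pair symmetry, and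
`∇_a W_{bcde} = ∇_a R_{bcde} + (1/3)[g_{bd} ∇_a R_{ce} - g_{cd} ∇_a R_{be}]`.
If the Ricci tensor is of Codazzi type (`∇_a R_{ce} = ∇_c R_{ae}`), then the
W-tensor satisfies the Bianchi-like identity
`∇_a W_{bcde} + ∇_b W_{cade} + ∇_c W_{abde} = 0`. -/
theorem W_Bianchi_like_of_Codazzi
    {DR : Fin 4 → Fin 4 → Fin 4 → Fin 4 → Fin 4 → ℝ}
    {DRic : Fin 4 → Fin 4 → Fin 4 → ℝ} {g : Fin 4 → Fin 4 → ℝ}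
    (hB2 : ∀ a b e c d, DR e a b c d + DR c a b d e + DR d a b e c = 0)
    (hPair : ∀ a b c d e, DR a b c d e = DR a d e b c)
    (hCodazzi : ∀ a c e, DRic a c e = DRic c a e)
    (DW : Fin 4 → Fin 4 → Fin 4 → Fin 4 → Fin 4 → ℝ)
    (hDW : ∀ a b c d e, DW a b c d e = DR a b c d e +
      (1 / 3) * (g b d * DRic a c e - g c d * DRic a b e)) :
    ∀ a b c d e, DW a b c d e + DW b c a d e + DW c a b d e = 0 := by
  intro a b c d e
  rw [hDW a b c d e, hDW b c a d e, hDW c a b d e]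
  linear_combination hB2 d e a b c + hPair a b c d e + hPair b c a d e + hPair c a b d e +
    - (1/3) * g c d * hCodazzi a b e +
    (1/3) * g a d * hCodazzi c b e - (1/3) * g b d * hCodazzi c a e
end

section
/- If the W-curvature tensor satisfies the Bianchi-like identity ∇_a W_{bcde} + ∇_b W_{cade} + ∇_c W_{abde} = 0, then the Ricci tensor is of Codazzi type: ∇_a R_{dc} = ∇_c R_{da}. -/
/-- 4-dimensional pseudo-Riemannian manifold, components at a point.
`DR a b c d e = ∇_a R_{bcde}`, `DRic a b c = ∇_a R_{bc}` (linked to `DR` by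
metric contraction), with the second Bianchi identity and pair symmetry, and
`∇_a W_{bcde} = ∇_a R_{bcde} + (1/3)[g_{bd} ∇_a R_{ce} - g_{cd} ∇_a R_{be}]`.
If the W-tensor satisfies the Bianchi-like identity
`∇_a W_{bcde} + ∇_b W_{cade} + ∇_c W_{abde} = 0`, then the Ricci tensor is of
Codazzi type: `∇_a R_{dc} = ∇_c R_{da}`. -/
theorem Codazzi_of_W_Bianchi_like
    {DR : Fin 4 → Fin 4 → Fin 4 → Fin 4 → Fin 4 → ℝ}
    {DRic : Fin 4 → Fin 4 → Fin 4 → ℝ} {g ginv : Fin 4 → Fin 4 → ℝ}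
    (hgSym : ∀ a b, g a b = g b a)
    (hginvSym : ∀ a b, ginv a b = ginv b a)
    (hginv : ∀ a c, (∑ b, ginv a b * g b c) = if a = c then 1 else 0)
    (hB2 : ∀ a b e c d, DR e a b c d + DR c a b d e + DR d a b e c = 0)
    (hPair : ∀ a b c d e, DR a b c d e = DR a d e b c)
    (hDRicSym : ∀ a c e, DRic a c e = DRic a e c)
    (hDRic : ∀ a c e, DRic a c e = ∑ h, ∑ d, ginv h d * DR a d c e h)
    (DW : Fin 4 → Fin 4 → Fin 4 → Fin 4 → Fin 4 → ℝ)
    (hDW : ∀ a b c d e, DW a b c d e = DR a b c d e +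
      (1 / 3) * (g b d * DRic a c e - g c d * DRic a b e))
    (hWB : ∀ a b c d e, DW a b c d e + DW b c a d e + DW c a b d e = 0) :
    ∀ a c d, DRic a d c = DRic c d a := by
  -- Step 1: from hWB, hDW, hB2, hPair derive the pure Ricci identity
  have hT : ∀ a b c d e : Fin 4,
      g b d * DRic a c e - g c d * DRic a b e + g c d * DRic b a e
      - g a d * DRic b c e + g a d * DRic c b e - g b d * DRic c a e = 0 := by
    intro a b c d e
    have h1 := hWB a b c d e
    rw [hDW a b c d e, hDW b c a d e, hDW c a b d e] at h1
    have h2 := hB2 d e a b c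
    have p1 := hPair a b c d e
    have p2 := hPair b c a d e
    have p3 := hPair c a b d e
    linarith
  -- delta lemma
  have hdelta : ∀ b c : Fin 4, (∑ d, ginv b d * g c d) = if b = c then 1 else 0 := by
    intro b c
    have : (∑ d, ginv b d * g c d) = ∑ d, ginv b d * g d c := by
      apply Finset.sum_congr rfl; intro d _; rw [hgSym c d]
    rw [this, hginv b c]
  -- trace lemma
  have htrace : (∑ d : Fin 4, ∑ b : Fin 4, ginv b d * g b d) = 4 := by
    rw [Finset.sum_comm]
    have : ∀ b : Fin 4, (∑ d, ginv b d * g b d) = 1 := by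
      intro b
      have h := hdelta b b
      simpa using h
    simp [this]
  -- contraction lemma
  have hcontr : ∀ (c : Fin 4) (F : Fin 4 → ℝ),
      (∑ d : Fin 4, ∑ b : Fin 4, ginv b d * (g c d * F b)) = F c := by
    intro c F
    rw [Finset.sum_comm]
    have h1 : ∀ b : Fin 4, (∑ d, ginv b d * (g c d * F b))
        = (if b = c then 1 else 0) * F b := by
      intro b
      rw [← hdelta b c, Finset.sum_mul]
      apply Finset.sum_congr rfl; intro d _; ring
    calc (∑ b : Fin 4, ∑ d : Fin 4, ginv b d * (g c d * F b))
        = ∑ b : Fin 4, (if b = c then 1 else 0) * F b := by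
          apply Finset.sum_congr rfl; intro b _; exact h1 b
      _ = F c := by simp
  -- Step 2: contract hT with ginv to get first-slot symmetry
  have key : ∀ a c e : Fin 4, DRic a c e = DRic c a e := by
    intro a c e
    have hz : (∑ d : Fin 4, ∑ b : Fin 4, ginv b d *
        (g b d * DRic a c e - g c d * DRic a b e + g c d * DRic b a e
         - g a d * DRic b c e + g a d * DRic c b e - g b d * DRic c a e)) = 0 := by
      apply Finset.sum_eq_zero; intro d _
      apply Finset.sum_eq_zero; intro b _
      rw [hT a b c d e, mul_zero]
    have hsplit : (∑ d : Fin 4, ∑ b : Fin 4, ginv b d *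
        (g b d * DRic a c e - g c d * DRic a b e + g c d * DRic b a e
         - g a d * DRic b c e + g a d * DRic c b e - g b d * DRic c a e))
        = (∑ d : Fin 4, ∑ b : Fin 4, ginv b d * g b d) * DRic a c e
          - (∑ d : Fin 4, ∑ b : Fin 4, ginv b d * (g c d * DRic a b e))
          + (∑ d : Fin 4, ∑ b : Fin 4, ginv b d * (g c d * DRic b a e))
          - (∑ d : Fin 4, ∑ b : Fin 4, ginv b d * (g a d * DRic b c e))
          + (∑ d : Fin 4, ∑ b : Fin 4, ginv b d * (g a d * DRic c b e))
          - (∑ d : Fin 4, ∑ b : Fin 4, ginv b d * g b d) * DRic c a e := by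
      simp only [Finset.sum_mul, ← Finset.sum_sub_distrib, ← Finset.sum_add_distrib]
      apply Finset.sum_congr rfl; intro d _
      apply Finset.sum_congr rfl; intro b _
      ring
    rw [hsplit, htrace, hcontr c (fun b => DRic a b e), hcontr c (fun b => DRic b a e),
      hcontr a (fun b => DRic b c e), hcontr a (fun b => DRic c b e)] at hz
    linarith
  intro a c d
  calc DRic a d c = DRic a c d := hDRicSym a d c
    _ = DRic c a d := key a c d
    _ = DRic c d a := hDRicSym c a d
end

section
/- For a W-flat perfect fluid spacetime satisfying the Einstein field equations with cosmological term, the matter contents satisfy the vacuum-like equation of state μ + p = 0. -/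
/-- W-flat perfect fluid spacetime. `g` is the metric with inverse
`ginv`, `u` the covariant fluid velocity with contravariant version `uc`
(`u_a u^a = -1`). The spacetime is W-flat (`R_{bc} = (R/4) g_{bc}`) and satisfies
the Einstein field equations with cosmological term for the perfect fluid
energy-momentum tensor `T_{bc} = (μ + p) u_b u_c + p g_{bc}`, with `k ≠ 0`.
Then the matter contents obey the vacuum-like equation of state `μ + p = 0`. -/
theorem W_flat_perfect_fluid_vacuum_like
    {Ricci g ginv T : Fin 4 → Fin 4 → ℝ}
    {u uc : Fin 4 → ℝ} {Rscal Λ k μ p : ℝ} (hk : k ≠ 0)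
    (hgSym : ∀ a b, g a b = g b a)
    (hginvSym : ∀ a b, ginv a b = ginv b a)
    (hginv : ∀ a c, (∑ b, ginv a b * g b c) = if a = c then 1 else 0)
    (hu : ∀ b, u b = ∑ a, g b a * uc a)
    (hnorm : (∑ a, u a * uc a) = -1)
    (hT : ∀ b c, T b c = (μ + p) * u b * u c + p * g b c)
    (hEinstein : ∀ b c, Ricci b c = (Rscal / 4) * g b c)
    (hEFE : ∀ b c, Ricci b c - (1 / 2) * Rscal * g b c + Λ * g b c = k * T b c) :
    μ + p = 0 := by
  -- k T_{bc} = (Λ - R/4) g_{bc}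
  have hKT : ∀ b c, k * T b c = (Λ - Rscal / 4) * g b c := by
    intro b c
    linear_combination (hEinstein b c) - hEFE b c
  -- uc a = ginv^{ab} u_b
  have huc : ∀ a, uc a = ∑ b, ginv a b * u b := by
    intro a
    have h1 : ∀ b, ginv a b * u b = ∑ c, ginv a b * (g b c * uc c) := by
      intro b
      rw [hu b, Finset.mul_sum]
    calc uc a = ∑ c, (if a = c then 1 else 0) * uc c := by simp
      _ = ∑ c, (∑ b, ginv a b * g b c) * uc c := by simp_rw [hginv]
      _ = ∑ c, ∑ b, ginv a b * (g b c * uc c) := by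
          simp_rw [Finset.sum_mul]; apply Finset.sum_congr rfl; intros
          apply Finset.sum_congr rfl; intros; ring
      _ = ∑ b, ∑ c, ginv a b * (g b c * uc c) := Finset.sum_comm
      _ = ∑ b, ginv a b * u b := by simp_rw [h1]
  -- S = ∑∑ g_{bc} uc^b uc^c = -1
  have hS : (∑ b, ∑ c, g b c * uc b * uc c) = -1 := by
    calc (∑ b, ∑ c, g b c * uc b * uc c)
        = ∑ b, u b * uc b := by
          apply Finset.sum_congr rfl; intro b _
          rw [hu b, Finset.sum_mul]
          apply Finset.sum_congr rfl; intros; ring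
      _ = -1 := hnorm
  -- P = ∑∑ u_b u_c uc^b uc^c = 1
  have hP : (∑ b, ∑ c, u b * u c * uc b * uc c) = 1 := by
    calc (∑ b, ∑ c, u b * u c * uc b * uc c)
        = ∑ b, (u b * uc b) * ∑ c, u c * uc c := by
          apply Finset.sum_congr rfl; intro b _
          rw [Finset.mul_sum]
          apply Finset.sum_congr rfl; intros; ring
      _ = ∑ b, (u b * uc b) * (-1) := by simp_rw [hnorm]
      _ = 1 := by rw [← Finset.sum_mul, hnorm]; ring
  -- Q = ∑∑ ginv^{bc} u_b u_c = -1
  have hQ : (∑ b, ∑ c, ginv b c * u b * u c) = -1 := by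
    calc (∑ b, ∑ c, ginv b c * u b * u c)
        = ∑ b, u b * uc b := by
          apply Finset.sum_congr rfl; intro b _
          rw [huc b, Finset.mul_sum]
          apply Finset.sum_congr rfl; intros; ring
      _ = -1 := hnorm
  -- G = ∑∑ ginv^{bc} g_{bc} = 4
  have hG : (∑ b, ∑ c, ginv b c * g b c) = 4 := by
    have h1 : ∀ b : Fin 4, (∑ c, ginv b c * g b c) = 1 := by
      intro b
      calc (∑ c, ginv b c * g b c) = ∑ c, ginv b c * g c b := by
            apply Finset.sum_congr rfl; intro c _; rw [hgSym c b]
        _ = if b = b then 1 else 0 := hginv b b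
        _ = 1 := by simp
    simp_rw [h1]
    norm_num
  -- Contraction with uc uc : k μ = -(Λ - R/4)
  have E1 : k * μ = -(Λ - Rscal / 4) := by
    have h := calc
      (∑ b, ∑ c, k * T b c * uc b * uc c)
          = ∑ b, ∑ c, (Λ - Rscal / 4) * g b c * uc b * uc c := by
            apply Finset.sum_congr rfl; intro b _
            apply Finset.sum_congr rfl; intro c _
            rw [hKT b c]
      _ = (Λ - Rscal / 4) * ∑ b, ∑ c, g b c * uc b * uc c := by
            rw [Finset.mul_sum]
            apply Finset.sum_congr rfl; intro b _
            rw [Finset.mul_sum]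
            apply Finset.sum_congr rfl; intros; ring
    have hL : (∑ b, ∑ c, k * T b c * uc b * uc c)
        = k * (μ + p) * (∑ b, ∑ c, u b * u c * uc b * uc c)
          + k * p * (∑ b, ∑ c, g b c * uc b * uc c) := by
      rw [Finset.mul_sum, Finset.mul_sum, ← Finset.sum_add_distrib]
      apply Finset.sum_congr rfl; intro b _
      rw [Finset.mul_sum, Finset.mul_sum, ← Finset.sum_add_distrib]
      apply Finset.sum_congr rfl; intro c _
      rw [hT b c]; ring
    rw [hL, hP, hS] at h
    linear_combination h
  -- Trace : k (3p - μ) = 4 (Λ - R/4)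
  have E2 : k * (3 * p - μ) = 4 * (Λ - Rscal / 4) := by
    have h := calc
      (∑ b, ∑ c, ginv b c * (k * T b c))
          = ∑ b, ∑ c, ginv b c * ((Λ - Rscal / 4) * g b c) := by
            apply Finset.sum_congr rfl; intro b _
            apply Finset.sum_congr rfl; intro c _
            rw [hKT b c]
      _ = (Λ - Rscal / 4) * ∑ b, ∑ c, ginv b c * g b c := by
            rw [Finset.mul_sum]
            apply Finset.sum_congr rfl; intro b _
            rw [Finset.mul_sum]
            apply Finset.sum_congr rfl; intros; ring
    have hL : (∑ b, ∑ c, ginv b c * (k * T b c))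
        = k * (μ + p) * (∑ b, ∑ c, ginv b c * u b * u c)
          + k * p * (∑ b, ∑ c, ginv b c * g b c) := by
      rw [Finset.mul_sum, Finset.mul_sum, ← Finset.sum_add_distrib]
      apply Finset.sum_congr rfl; intro b _
      rw [Finset.mul_sum, Finset.mul_sum, ← Finset.sum_add_distrib]
      apply Finset.sum_congr rfl; intro c _
      rw [hT b c]; ring
    rw [hL, hQ, hG] at h
    linear_combination h
  -- Combine: 3 k (μ + p) = 0
  have h3 : k * (μ + p) = 0 := by linear_combination (4/3)*E1 + (1/3)*E2
  rcases mul_eq_zero.mp h3 with h | h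
  · exact absurd h hk
  · exact h
end

section
/- If the energy-momentum tensor T_{ab} is of Codazzi type (∇_c T_{ab} = ∇_b T_{ac}) in a 4-dimensional spacetime satisfying the Einstein field equations R_{ab} - (1/2) R g_{ab} = k T_{ab}, then the Ricci tensor is divergence-free: ∇_b R^{ab} = 0. -/
/-- 4-dimensional spacetime satisfying the Einstein field equations
`R_{ab} - (1/2) R g_{ab} = k T_{ab}` (k ≠ 0). `DRic c a b = ∇_c R_{ab}`,
`DT c a b = ∇_c T_{ab}`, `DScal c = ∇_c R`, `divRic a = ∇_b R^{ab}`, with the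
contracted second Bianchi identity `∇_b(R^{ab} - (1/2) R g^{ab}) = 0`. If the
energy-momentum tensor is of Codazzi type (`∇_c T_{ab} = ∇_b T_{ac}`), then the
Ricci tensor is divergence-free: `∇_b R^{ab} = 0`. -/
theorem Ricci_conserved_of_Codazzi_T
    {DRic DT : Fin 4 → Fin 4 → Fin 4 → ℝ}
    {g ginv : Fin 4 → Fin 4 → ℝ} {DScal divRic : Fin 4 → ℝ} {k : ℝ}
    (hk : k ≠ 0)
    (hgSym : ∀ a b, g a b = g b a)
    (hginvSym : ∀ a b, ginv a b = ginv b a)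
    (hginv : ∀ a c, (∑ b, ginv a b * g b c) = if a = c then 1 else 0)
    (hDRicSym : ∀ c a b, DRic c a b = DRic c b a)
    (hDScal : ∀ c, DScal c = ∑ a, ∑ b, ginv a b * DRic c a b)
    (hdivRic : ∀ a, divRic a =
      ∑ b, ∑ c, ∑ d, ginv a c * ginv b d * DRic b c d)
    (hContractedBianchi : ∀ a, divRic a = (1 / 2) * ∑ b, ginv a b * DScal b)
    (hDEFE : ∀ c a b, DRic c a b - (1 / 2) * DScal c * g a b = k * DT c a b)
    (hCodazzi : ∀ c a b, DT c a b = DT b a c) :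
    ∀ a, divRic a = 0 := by
  -- delta with g on the left
  have hdelta : ∀ a c, (∑ b, g a b * ginv b c) = if a = c then 1 else 0 := by
    intro a c
    have h1 : (∑ b, g a b * ginv b c) = ∑ b, ginv c b * g b a := by
      apply Finset.sum_congr rfl; intro b _
      rw [hgSym a b, hginvSym b c]; ring
    rw [h1, hginv c a]
    by_cases h : a = c <;> simp [h, eq_comm]
  -- trace
  have htrace : (∑ a, ∑ b, ginv a b * g a b) = 4 := by
    have h1 : (∑ a, ∑ b, ginv a b * g a b) = ∑ a : Fin 4, (1:ℝ) := by
      apply Finset.sum_congr rfl; intro a _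
      have h2 : (∑ b, ginv a b * g a b) = ∑ b, ginv a b * g b a := by
        apply Finset.sum_congr rfl; intro b _; rw [hgSym]
      rw [h2, hginv a a]; simp
    rw [h1]; simp
  -- lowered contracted Bianchi: ∑ b d, ginv b d * DRic b e d = (1/2) * DScal e
  have hL : ∀ e, (∑ b, ∑ d, ginv b d * DRic b e d) = (1/2) * DScal e := by
    intro e
    have lhs : (∑ a, g e a * divRic a) = ∑ b, ∑ d, ginv b d * DRic b e d := by
      calc (∑ a, g e a * divRic a)
          = ∑ a, ∑ b, ∑ c, ∑ d, g e a * (ginv a c * ginv b d * DRic b c d) := by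
            simp_rw [hdivRic, Finset.mul_sum]
        _ = ∑ b, ∑ c, ∑ d, ∑ a, g e a * (ginv a c * ginv b d * DRic b c d) := by
            rw [Finset.sum_comm]
            apply Finset.sum_congr rfl; intro b _
            rw [Finset.sum_comm]
            apply Finset.sum_congr rfl; intro c _
            rw [Finset.sum_comm]
        _ = ∑ b, ∑ c, ∑ d, (∑ a, g e a * ginv a c) * (ginv b d * DRic b c d) := by
            apply Finset.sum_congr rfl; intro b _
            apply Finset.sum_congr rfl; intro c _
            apply Finset.sum_congr rfl; intro d _
            rw [Finset.sum_mul]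
            apply Finset.sum_congr rfl; intro a _; ring
        _ = ∑ b, ∑ c, ∑ d, (if e = c then (1:ℝ) else 0) * (ginv b d * DRic b c d) := by
            simp_rw [hdelta]
        _ = ∑ b, ∑ d, ginv b d * DRic b e d := by
            apply Finset.sum_congr rfl; intro b _
            rw [Finset.sum_comm]
            apply Finset.sum_congr rfl; intro d _
            simp
    have rhs : (∑ a, g e a * divRic a) = (1/2) * DScal e := by
      calc (∑ a, g e a * divRic a)
          = ∑ a, ∑ b, (1/2) * ((g e a * ginv a b) * DScal b) := by
            apply Finset.sum_congr rfl; intro a _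
            rw [hContractedBianchi, Finset.mul_sum, Finset.mul_sum]
            apply Finset.sum_congr rfl; intro b _; ring
        _ = ∑ b, ∑ a, (1/2) * ((g e a * ginv a b) * DScal b) := by rw [Finset.sum_comm]
        _ = ∑ b, (1/2) * ((∑ a, g e a * ginv a b) * DScal b) := by
            apply Finset.sum_congr rfl; intro b _
            rw [Finset.sum_mul, Finset.mul_sum]
        _ = (1/2) * DScal e := by
            simp_rw [hdelta, ite_mul, one_mul, zero_mul, mul_ite, mul_zero]
            simp
    rw [← lhs, rhs]
  -- DScal vanishes
  have hDScal0 : ∀ c, DScal c = 0 := by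
    intro c
    have hCod : ∀ a b, DRic c a b - (1/2) * DScal c * g a b
        = DRic b a c - (1/2) * DScal b * g a c := by
      intro a b
      have h1 := hDEFE c a b
      have h2 := hDEFE b a c
      rw [hCodazzi c a b] at h1
      exact h1.trans h2.symm
    have hS : (∑ a, ∑ b, ginv a b * (DRic c a b - (1/2) * DScal c * g a b))
        = (∑ a, ∑ b, ginv a b * (DRic b a c - (1/2) * DScal b * g a c)) := by
      apply Finset.sum_congr rfl; intro a _
      apply Finset.sum_congr rfl; intro b _
      rw [hCod]
    have hS1 : (∑ a, ∑ b, ginv a b * (DRic c a b - (1/2) * DScal c * g a b))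
        = - DScal c := by
      have e1 : (∑ a, ∑ b, ginv a b * (DRic c a b - (1/2) * DScal c * g a b))
          = (∑ a, ∑ b, ginv a b * DRic c a b)
            - (1/2) * DScal c * (∑ a, ∑ b, ginv a b * g a b) := by
        rw [Finset.mul_sum, ← Finset.sum_sub_distrib]
        apply Finset.sum_congr rfl; intro a _
        rw [Finset.mul_sum, ← Finset.sum_sub_distrib]
        apply Finset.sum_congr rfl; intro b _; ring
      rw [e1, ← hDScal, htrace]; ring
    have t1 : (∑ a, ∑ b, ginv a b * DRic b a c) = (1/2) * DScal c := by
      rw [Finset.sum_comm]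
      calc (∑ b, ∑ a, ginv a b * DRic b a c)
          = ∑ b, ∑ a, ginv b a * DRic b c a := by
            apply Finset.sum_congr rfl; intro b _
            apply Finset.sum_congr rfl; intro a _
            rw [hginvSym a b, hDRicSym b a c]
        _ = (1/2) * DScal c := hL c
    have t2 : (∑ a, ∑ b, ginv a b * ((1/2) * DScal b * g a c)) = (1/2) * DScal c := by
      rw [Finset.sum_comm]
      calc (∑ b, ∑ a, ginv a b * ((1/2) * DScal b * g a c))
          = ∑ b, (1/2) * DScal b * (∑ a, ginv b a * g a c) := by
            apply Finset.sum_congr rfl; intro b _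
            rw [Finset.mul_sum]
            apply Finset.sum_congr rfl; intro a _
            rw [hginvSym a b]; ring
        _ = ∑ b, (1/2) * DScal b * (if b = c then 1 else 0) := by
            simp_rw [hginv]
        _ = (1/2) * DScal c := by
            simp_rw [mul_ite, mul_one, mul_zero]
            simp
    have hS2 : (∑ a, ∑ b, ginv a b * (DRic b a c - (1/2) * DScal b * g a c)) = 0 := by
      have split : (∑ a, ∑ b, ginv a b * (DRic b a c - (1/2) * DScal b * g a c))
          = (∑ a, ∑ b, ginv a b * DRic b a c)
            - (∑ a, ∑ b, ginv a b * ((1/2) * DScal b * g a c)) := by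
        rw [← Finset.sum_sub_distrib]
        apply Finset.sum_congr rfl; intro a _
        rw [← Finset.sum_sub_distrib]
        apply Finset.sum_congr rfl; intro b _; ring
      rw [split, t1, t2]; ring
    have := hS1.symm.trans (hS.trans hS2)
    linarith
  intro a
  rw [hContractedBianchi a]
  simp [hDScal0]
end

section
/- For a spacetime satisfying the Einstein equations with a trace-free energy-momentum tensor (purely electromagnetic distribution, T = 0), the divergence of the W-tensor equals ∇_h W^h_{bcd} = k(∇_d T_{bc} - (2/3) ∇_c T_{bd}); in particular, if T_{bc} is covariantly constant then the W-tensor is conserved (∇_h W^h_{bcd} = 0). -/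
/-- 4-dimensional spacetime satisfying the Einstein equations for a
purely electromagnetic distribution: `R_{ab} = k T_{ab}` with trace-free
energy-momentum tensor (`T = 0`, hence `∇_c T = 0`). With
`divW b c d = ∇_h W^h_{bcd}`, `divRiem b c d = ∇_h R^h_{bcd} = ∇_d R_{bc} - ∇_c R_{bd}`,
`DRic c b d = ∇_c R_{bd} = k ∇_c T_{bd}`, `divRmix d = ∇_h R^h_d = (1/2) ∇_d R`,
`DScal d = ∇_d R = -k ∇_d T`, one has
`∇_h W^h_{bcd} = k(∇_d T_{bc} - (2/3) ∇_c T_{bd})`; in particular, if `T_{bc}` is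
covariantly constant then the W-tensor is conserved: `∇_h W^h_{bcd} = 0`. -/
theorem divergence_W_electromagnetic
    {divW divRiem DRic DT : Fin 4 → Fin 4 → Fin 4 → ℝ}
    {g : Fin 4 → Fin 4 → ℝ} {DTr DScal divRmix : Fin 4 → ℝ} {k : ℝ}
    (hDTSym : ∀ c b d, DT c b d = DT c d b)
    (hdivRiem : ∀ b c d, divRiem b c d = DRic d b c - DRic c b d)
    (hdivW : ∀ b c d, divW b c d = divRiem b c d +
      (1 / 3) * (DRic c b d - g b c * divRmix d))
    (hRicT : ∀ c b d, DRic c b d = k * DT c b d)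
    (hScalT : ∀ d, DScal d = - k * DTr d)
    (hCB : ∀ d, divRmix d = (1 / 2) * DScal d)
    (hDTr : ∀ c, DTr c = 0) :
    (∀ b c d, divW b c d = k * (DT d b c - (2 / 3) * DT c b d)) ∧
    ((∀ c b d, DT c b d = 0) → ∀ b c d, divW b c d = 0) := by
  have main : ∀ b c d, divW b c d = k * (DT d b c - (2 / 3) * DT c b d) := by
    intro b c d
    simp only [hdivW, hdivRiem, hRicT, hCB, hScalT, hDTr]
    ring
  exact ⟨main, fun h b c d => by rw [main b c d, h, h]; ring⟩
end

section
/- For a perfect fluid spacetime in which the divergence of the W-tensor vanishes and the energy-momentum tensor is of Codazzi type, the quantity μ - 3p is constant (∇_c(μ - 3p) = 0). -/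
/-- Perfect fluid spacetime with `k = 1`:
`T_{ab} = (μ + p) u_a u_b + p g_{ab}`, `u_a u^a = -1`, so `T = -μ + 3p` and
`∇_c T = -∇_c μ + 3 ∇_c p`. `DT c a b = ∇_c T_{ab}`, `Dμ, Dp` the gradients of
`μ, p`, `Du c a = ∇_c u_a`. The divergence of the W-tensor is
`∇_h W^h_{bcd} = (∇_d T_{bc} - (2/3)∇_c T_{bd}) + (1/3)(g_{bd} ∇_c T - (5/2) g_{bc} ∇_d T)`.
If `T_{ab}` is Codazzi and `∇_h W^h_{bcd} = 0`, then `∇_c(μ - 3p) = 0`, i.e.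
`μ - 3p` is constant. -/
theorem perfect_fluid_divW_Codazzi
    {DT : Fin 4 → Fin 4 → Fin 4 → ℝ} {divW : Fin 4 → Fin 4 → Fin 4 → ℝ}
    {g ginv Du : Fin 4 → Fin 4 → ℝ} {u uc Dμ Dp DTr : Fin 4 → ℝ} {μ p : ℝ}
    (hgSym : ∀ a b, g a b = g b a)
    (hginvSym : ∀ a b, ginv a b = ginv b a)
    (hginv : ∀ a c, (∑ b, ginv a b * g b c) = if a = c then 1 else 0)
    (hnorm : (∑ a, u a * uc a) = -1)
    (hu : ∀ b, u b = ∑ a, g b a * uc a)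
    (hDuOrth : ∀ c, (∑ a, uc a * Du c a) = 0)
    (hDT : ∀ c a b, DT c a b = (Dμ c + Dp c) * u a * u b +
      (μ + p) * (Du c a * u b + u a * Du c b) + Dp c * g a b)
    (hDTr : ∀ c, DTr c = - Dμ c + 3 * Dp c)
    (hdivW : ∀ b c d, divW b c d = (DT d b c - (2 / 3) * DT c b d) +
      (1 / 3) * (g b d * DTr c - (5 / 2) * g b c * DTr d))
    (hCodazzi : ∀ c a b, DT c a b = DT b a c)
    (hW0 : ∀ b c d, divW b c d = 0) :
    ∀ c, Dμ c - 3 * Dp c = 0 := by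
  have key1 : ∀ d, (∑ b, ginv d b * u b) = uc d := by
    intro d
    calc (∑ b, ginv d b * u b) = ∑ b, ∑ a, ginv d b * g b a * uc a := by
          simp [hu, Finset.mul_sum, mul_assoc]
      _ = ∑ a, (∑ b, ginv d b * g b a) * uc a := by
          rw [Finset.sum_comm]; simp [Finset.sum_mul]
      _ = uc d := by simp [hginv]
  have key2 : ∀ b, (∑ d, ginv d b * u d) = uc b := by
    intro b
    simp only [fun d => hginvSym d b]
    exact key1 b
  intro c
  have h0 : (∑ d, ∑ b, ginv d b * divW b c d) = 0 := by simp [hW0]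
  have hred : ∀ b d, divW b c d = (1/3) * DT c b d + (1/3) * (g b d * DTr c)
      - (5/6) * (g b c * DTr d) := by
    intro b d
    rw [hdivW, hCodazzi d b c]; ring
  -- the four auxiliary contractions
  have e1 : (∑ d, uc d * u d) = -1 := by
    rw [← hnorm]; exact Finset.sum_congr rfl fun a _ => mul_comm _ _
  have e2 : (∑ d, (∑ b, ginv d b * Du c b) * u d) = 0 := by
    calc (∑ d, (∑ b, ginv d b * Du c b) * u d)
        = ∑ d, ∑ b, Du c b * (ginv d b * u d) := by
          simp only [Finset.sum_mul]
          exact Finset.sum_congr rfl fun d _ => Finset.sum_congr rfl fun b _ => by ring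
      _ = ∑ b, Du c b * (∑ d, ginv d b * u d) := by
          rw [Finset.sum_comm]; simp [Finset.mul_sum]
      _ = ∑ b, uc b * Du c b := by simp only [key2]; exact Finset.sum_congr rfl fun b _ => mul_comm _ _
      _ = 0 := hDuOrth c
  have e3 : (∑ d, uc d * Du c d) = 0 := hDuOrth c
  have e4 : (∑ d, ∑ b, ginv d b * g b d) = 4 := by
    simp only [hginv]
    simp
  have e5 : (∑ d, (∑ b, ginv d b * g b c) * DTr d) = DTr c := by
    simp [hginv]
  -- trace of DT
  have hA : (∑ d, ∑ b, ginv d b * DT c b d) = DTr c := by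
    have expand : ∀ d, (∑ b, ginv d b * DT c b d)
        = (Dμ c + Dp c) * ((∑ b, ginv d b * u b) * u d)
          + (μ + p) * ((∑ b, ginv d b * Du c b) * u d
              + (∑ b, ginv d b * u b) * Du c d)
          + Dp c * (∑ b, ginv d b * g b d) := by
      intro d
      have h : ∀ b, ginv d b * DT c b d
          = (Dμ c + Dp c) * ((ginv d b * u b) * u d)
            + (μ + p) * ((ginv d b * Du c b) * u d + (ginv d b * u b) * Du c d)
            + Dp c * (ginv d b * g b d) := fun b => by rw [hDT]; ring
      rw [Finset.sum_congr rfl fun b _ => h b]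
      simp only [Finset.sum_add_distrib, ← Finset.mul_sum, ← Finset.sum_mul]
    calc (∑ d, ∑ b, ginv d b * DT c b d)
        = ∑ d, ((Dμ c + Dp c) * (uc d * u d)
            + (μ + p) * ((∑ b, ginv d b * Du c b) * u d + uc d * Du c d)
            + Dp c * (∑ b, ginv d b * g b d)) := by
          exact Finset.sum_congr rfl fun d _ => by rw [expand d, key1 d]
      _ = (Dμ c + Dp c) * (∑ d, uc d * u d)
            + (μ + p) * ((∑ d, (∑ b, ginv d b * Du c b) * u d) + (∑ d, uc d * Du c d))
            + Dp c * (∑ d, ∑ b, ginv d b * g b d) := by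
          simp only [mul_add, Finset.sum_add_distrib, Finset.mul_sum]
      _ = DTr c := by rw [e1, e2, e3, e4, hDTr]; ring
  -- contract the reduced divergence equation
  have hcontr : (∑ d, ∑ b, ginv d b * divW b c d)
      = (1/3) * DTr c + (1/3) * (4 * DTr c) - (5/6) * DTr c := by
    have h : ∀ d b, ginv d b * divW b c d
        = (1/3) * (ginv d b * DT c b d) + (1/3) * ((ginv d b * g b d) * DTr c)
          - (5/6) * ((ginv d b * g b c) * DTr d) := fun d b => by rw [hred]; ring
    calc (∑ d, ∑ b, ginv d b * divW b c d)
        = ∑ d, ((1/3) * (∑ b, ginv d b * DT c b d)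
            + (1/3) * ((∑ b, ginv d b * g b d) * DTr c)
            - (5/6) * ((∑ b, ginv d b * g b c) * DTr d)) := by
          refine Finset.sum_congr rfl fun d _ => ?_
          rw [Finset.sum_congr rfl fun b _ => h d b]
          simp only [Finset.sum_add_distrib, Finset.sum_sub_distrib, ← Finset.mul_sum,
            ← Finset.sum_mul]
      _ = (1/3) * (∑ d, ∑ b, ginv d b * DT c b d)
            + (1/3) * ((∑ d, ∑ b, ginv d b * g b d) * DTr c)
            - (5/6) * (∑ d, (∑ b, ginv d b * g b c) * DTr d) := by
          simp only [Finset.sum_add_distrib, Finset.sum_sub_distrib, Finset.mul_sum,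
            Finset.sum_mul]
      _ = (1/3) * DTr c + (1/3) * (4 * DTr c) - (5/6) * DTr c := by rw [hA, e4, e5]
  have : DTr c = 0 := by
    have := hcontr.symm.trans h0
    linarith
  have := hDTr c
  linarith
end

section
/- If in a perfect fluid spacetime with conserved W-tensor the kinematical decomposition equation yields (μ+p)[3 u̇_b u_c - (1/3)θ(g_{bc} + u_b u_c) + ∇_c u_b] = 0 and μ + p ≠ 0, then substituting the kinematical decomposition ∇_c u_b = (1/3)θ(g_{bc}+u_b u_c) - u̇_b u_c + σ_{bc} + ω_{bc} gives 2 u̇_b u_c + σ_{bc} + ω_{bc} = 0, which forces u̇_b = 0, σ_{bc} = 0, and ω_{bc} = 0. -/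
/-- 4-dimensional spacetime with unit timelike fluid velocity `u`
(covariant `u`, contravariant `uc`, `u_a u^a = -1`), expansion `θ`, acceleration
`udot` (orthogonal to `u`), symmetric shear `σ` (trace-free, `σ_{ab} u^b = 0`)
and antisymmetric vorticity `ω` (`ω_{ab} u^b = 0`), with the kinematical
decomposition `∇_c u_b = (1/3)θ(g_{bc} + u_b u_c) - u̇_b u_c + σ_{bc} + ω_{bc}`.
If `(μ+p)[3 u̇_b u_c - (1/3)θ(g_{bc} + u_b u_c) + ∇_c u_b] = 0` and `μ + p ≠ 0`,
then `2 u̇_b u_c + σ_{bc} + ω_{bc} = 0`, which forces `u̇_b = 0`, `σ_{bc} = 0` and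
`ω_{bc} = 0`. -/
theorem kinematics_forces_FRW
    {g ginv Du σ ω : Fin 4 → Fin 4 → ℝ} {u uc udot : Fin 4 → ℝ} {θ μ p : ℝ}
    (hnorm : (∑ a, u a * uc a) = -1)
    (hudotOrth : (∑ a, udot a * uc a) = 0)
    (hσSym : ∀ a b, σ a b = σ b a)
    (hσu : ∀ a, (∑ b, σ a b * uc b) = 0)
    (hσTraceFree : (∑ a, ∑ b, ginv a b * σ a b) = 0)
    (hωAnti : ∀ a b, ω a b = - ω b a)
    (hωu : ∀ a, (∑ b, ω a b * uc b) = 0)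
    (hkin : ∀ b c, Du c b = (1 / 3) * θ * (g b c + u b * u c) -
      udot b * u c + σ b c + ω b c)
    (heq : ∀ b c, (μ + p) * (3 * udot b * u c -
      (1 / 3) * θ * (g b c + u b * u c) + Du c b) = 0)
    (hμp : μ + p ≠ 0) :
    (∀ b c, 2 * udot b * u c + σ b c + ω b c = 0) ∧
    (∀ b, udot b = 0) ∧ (∀ b c, σ b c = 0) ∧ (∀ b c, ω b c = 0) := by
  have h : ∀ b c, 2 * udot b * u c + σ b c + ω b c = 0 := by
    intro b c
    have h1 := heq b c
    rw [hkin b c] at h1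
    have h2 := mul_eq_zero.mp h1
    rcases h2 with h2 | h2
    · exact absurd h2 hμp
    · linarith
  have hudot : ∀ b, udot b = 0 := by
    intro b
    have h3 : (∑ c, (2 * udot b * u c + σ b c + ω b c) * uc c) = 0 := by
      apply Finset.sum_eq_zero; intro c _; rw [h b c]; ring
    have h4 : (∑ c, (2 * udot b * u c + σ b c + ω b c) * uc c)
        = 2 * udot b * (∑ c, u c * uc c) + (∑ c, σ b c * uc c)
          + (∑ c, ω b c * uc c) := by
      rw [Finset.mul_sum, ← Finset.sum_add_distrib, ← Finset.sum_add_distrib]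
      apply Finset.sum_congr rfl; intro c _; ring
    rw [h4, hnorm, hσu b, hωu b] at h3
    linarith
  refine ⟨h, hudot, ?_, ?_⟩ <;> intro b c <;>
    have h5 := h b c <;> have h6 := h c b <;>
    rw [hudot b] at h5 <;> rw [hudot c] at h6 <;>
    rw [hσSym c b, hωAnti c b] at h6 <;> linarith
end
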